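/- Let ⊢ be a monotone cut-idempotent on 𝖥S. Then 𝖰𝖥S, ordered by inclusion, is a stably continuous frame; concretely: it is a complete lattice in which the join of 𝒫 ⊆ 𝖰𝖥S is (⋃𝒫)↓, directed joins are unions, finite meets are intersections, and finite meets distribute over arbitrary joins; it is a continuous lattice whose way-below relation satisfies, for quasi-ideals 𝒬, ℛ: 𝒬 ≪ ℛ iff there is a finite 𝒢 ⊆ ℛ with F ⊢ H for every F ∈ 𝒬 and every H ∈ 𝒢_⋔; and ≪ is stable, i.e. 𝒬 ≪ ℛ and 𝒬 ≪ 𝒮 imply 𝒬 ≪ ℛ ∩ 𝒮. Moreover, writing G^⊣ = {F ∈ 𝖥S : F ⊢ G}: (a) ⊢ is divisible iff G^⊣ equals the join ⋁_{g ∈ G} {g}^⊣ in 𝖰𝖥S for all G ∈ 𝖥S; in that case 𝖰𝖥S is generated by the principal quasi-ideals ({s}^⊣)_{s ∈ S} (every quasi-ideal is a join of finite meets of them), and F ⊩ G ⟺ ⋀_{f ∈ F} {f}^⊣ ⊆ ⋁_{g ∈ G} {g}^⊣ for all F, G ∈ 𝖥S; (b) when ⊢ is divisible, ⊢ is auxiliary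 to ⊩ iff F ⊢ G ⟺ ⋀_{f ∈ F} {f}^⊣ ≪ ⋁_{g ∈ G} {g}^⊣ for all F, G ∈ 𝖥S. -/

import Mathlib

open scoped Classical

/-! Common definitions: entailment/cover relations on finite subsets,
tight subsets, the tight spectrum, quasi-ideals, and topological notions. -/

/-- `H` is a *selection* of the finite family `𝒢`: it meets every member of `𝒢`. -/
def IsSelection {S : Type*} (𝒢 : Finset (Finset S)) (H : Finset S) : Prop :=
  ∀ I ∈ 𝒢, ∃ x ∈ I, x ∈ H

/-- Cut-composition `r • s` of relations. -/
def CutComp {A B C : Type*} (r : Finset A → Finset B → Prop)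
    (s : Finset B → Finset C → Prop) (F : Finset A) (G : Finset C) : Prop :=
  ∃ ℱ 𝒢 : Finset (Finset B),
    (∀ H ∈ ℱ, r F H) ∧
    (∀ K : Finset B, IsSelection ℱ K → ∃ I ∈ 𝒢, I ⊆ K) ∧
    (∀ I ∈ 𝒢, s I G)

/-- Upper relation: `F ⊢ G ⊆ H` implies `F ⊢ H`. -/
def IsUpperRel {A B : Type*} (r : Finset A → Finset B → Prop) : Prop :=
  ∀ F G H, r F G → G ⊆ H → r F H

/-- Lower relation: `F ⊢ G` and `F ⊆ E` imply `E ⊢ G`. -/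
def IsLowerRel {A B : Type*} (r : Finset A → Finset B → Prop) : Prop :=
  ∀ F G E, r F G → F ⊆ E → r E G

/-- `F ⊢_{1∃} G` iff `F ⊢ {g}` for some `g ∈ G`. -/
def OneExists {A B : Type*} (r : Finset A → Finset B → Prop)
    (F : Finset A) (G : Finset B) : Prop :=
  ∃ g ∈ G, r F {g}

/-- Cut-transitivity: `⊢ • ⊢ ⊆ ⊢`. -/
def CutTransitive {S : Type*} (r : Finset S → Finset S → Prop) : Prop :=
  ∀ F G, CutComp r r F G → r F G

/-- Divisibility: `⊢ ⊆ ⊢ • ⊢_{1∃}`. -/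
def Divisible {S : Type*} (r : Finset S → Finset S → Prop) : Prop :=
  ∀ F G, r F G → CutComp r (OneExists r) F G

/-- A strong idempotent: monotone, cut-transitive and divisible. -/
def StrongIdempotent {S : Type*} (r : Finset S → Finset S → Prop) : Prop :=
  IsUpperRel r ∧ IsLowerRel r ∧ CutTransitive r ∧ Divisible r

/-- Gentzen's cut rule. -/
def CutRel {S : Type*} (r : Finset S → Finset S → Prop) : Prop :=
  ∀ (s : S) (F G : Finset S), r (insert s F) G → r F (insert s G) → r F G

/-- An entailment: a monotone cut relation. -/
def Entailment {S : Type*} (r : Finset S → Finset S → Prop) : Prop :=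
  IsUpperRel r ∧ IsLowerRel r ∧ CutRel r

/-- 1-reflexivity: `{s} ⊢ {s}` for all `s`. -/
def OneReflexive {S : Type*} (r : Finset S → Finset S → Prop) : Prop :=
  ∀ s : S, r {s} {s}

/-- The relation `⊩` induced by `⊢`:
`F ⊩ G` iff every `H` with `H ⊢ {f}` for all `f ∈ F` satisfies `H ⊢ G`. -/
def Vdash {S : Type*} (r : Finset S → Finset S → Prop)
    (F G : Finset S) : Prop :=
  ∀ H : Finset S, (∀ f ∈ F, r H {f}) → r H G

/-- `⊢` is auxiliary to `⊨`. -/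
def AuxiliaryTo {S T : Type*} (r : Finset S → Finset T → Prop)
    (v : Finset S → Finset S → Prop) : Prop :=
  ∀ (F H : Finset S) (G : Finset T), (∀ h ∈ H, r (insert h F) G) → v F H → r F G

/-- `⊢` is dual-auxiliary to `⊨`. -/
def DualAuxiliaryTo {S : Type*} (r v : Finset S → Finset S → Prop) : Prop :=
  ∀ F G H : Finset S, r H G → (∀ h ∈ H, v F (insert h G)) → r F G

/-- A semicut relation: self-dual-auxiliary. -/
def Semicut {S : Type*} (r : Finset S → Finset S → Prop) : Prop :=
  DualAuxiliaryTo r r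

/-- A cover relation: a strong idempotent auxiliary to `⊩`. -/
def CoverRelation {S : Type*} (r : Finset S → Finset S → Prop) : Prop :=
  StrongIdempotent r ∧ AuxiliaryTo r (Vdash r)

/-- Tight subset. -/
def TightSet {S : Type*} (r : Finset S → Finset S → Prop) (T : Set S) : Prop :=
  ∀ G : Finset S, (∃ F : Finset S, ↑F ⊆ T ∧ r F G) ↔ ∃ g ∈ G, g ∈ T

/-- Round subset. -/
def RoundSet {S : Type*} (r : Finset S → Finset S → Prop) (R : Set S) : Prop :=
  ∀ x ∈ R, ∃ F : Finset S, ↑F ⊆ R ∧ r F {x}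

/-- Prime subset. -/
def PrimeSet {S : Type*} (r : Finset S → Finset S → Prop) (P : Set S) : Prop :=
  ∀ F G : Finset S, ↑F ⊆ P → r F G → ∃ g ∈ G, g ∈ P

/-- The tight spectrum: nonempty tight subsets. -/
def TightSpec {S : Type*} (r : Finset S → Finset S → Prop) : Type _ :=
  {T : Set S // TightSet r T ∧ T.Nonempty}

/-- The underlying set of points of an element of the tight spectrum. -/
def TightSpec.pts {S : Type*} {r : Finset S → Finset S → Prop} (T : TightSpec r) : Set S :=
  Subtype.val T

/-- The spectrum topology, generated by the subbasic sets `𝖳_p = {T | p ∈ T}`. -/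
instance TightSpec.instTopologicalSpace {S : Type*} (r : Finset S → Finset S → Prop) :
    TopologicalSpace (TightSpec r) :=
  TopologicalSpace.generateFrom (Set.range fun p : S => {T : TightSpec r | p ∈ T.pts})

/-- `𝖳_F = {T ∈ 𝖳^S : F ⊆ T}`. -/
def TightSpec.TF {S : Type*} (r : Finset S → Finset S → Prop) (F : Finset S) :
    Set (TightSpec r) :=
  {T : TightSpec r | ↑F ⊆ T.pts}

/-- `𝖳^G = {T ∈ 𝖳^S : T ∩ G ≠ ∅}`. -/
def TightSpec.TG {S : Type*} (r : Finset S → Finset S → Prop) (G : Finset S) :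
    Set (TightSpec r) :=
  {T : TightSpec r | ∃ g ∈ G, g ∈ T.pts}

/-- `p ⋐ q`: every open cover of `q` has a finite subcover of `p`. -/
def CompactlyContained {X : Type*} [TopologicalSpace X] (p q : Set X) : Prop :=
  ∀ 𝒰 : Set (Set X), (∀ u ∈ 𝒰, IsOpen u) → q ⊆ ⋃₀ 𝒰 →
    ∃ 𝒱 : Finset (Set X), ↑𝒱 ⊆ 𝒰 ∧ p ⊆ ⋃₀ ↑𝒱

/-- Core compactness. -/
def CoreCompact (X : Type*) [TopologicalSpace X] : Prop :=
  ∀ p : Set X, IsOpen p → ∀ x ∈ p, ∃ q : Set X, IsOpen q ∧ x ∈ q ∧ CompactlyContained q p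

/-- Core coherence. -/
def CoreCoherent (X : Type*) [TopologicalSpace X] : Prop :=
  ∀ p q s : Set X, IsOpen p → IsOpen q → IsOpen s →
    CompactlyContained p q → CompactlyContained p s → CompactlyContained p (q ∩ s)

/-- Sobriety: each irreducible closed set is the closure of a unique point. -/
def SoberSpace (X : Type*) [TopologicalSpace X] : Prop :=
  ∀ C : Set X, IsIrreducible C → IsClosed C → ∃! x : X, C = closure {x}

/-- Stably locally compact: core compact, core coherent and sober. -/
def StablyLocallyCompact (X : Type*) [TopologicalSpace X] : Prop :=
  CoreCompact X ∧ CoreCoherent X ∧ SoberSpace X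

/-- The specialisation preorder: `x → y` iff every open set containing `y` contains `x`. -/
def SpecTo {X : Type*} [TopologicalSpace X] (x y : X) : Prop :=
  ∀ U : Set X, IsOpen U → y ∈ U → x ∈ U

/-- Saturation of a subset. -/
def satOf {X : Type*} [TopologicalSpace X] (D : Set X) : Set X :=
  {x | ∃ y ∈ D, SpecTo x y}

/-- Saturated subsets. -/
def IsSaturatedSet {X : Type*} [TopologicalSpace X] (K : Set X) : Prop :=
  K = satOf K

/-- The patch topology: generated by open sets together with complements of
compact saturated sets. -/
def patchTopology (X : Type*) [TopologicalSpace X] : TopologicalSpace X :=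
  TopologicalSpace.generateFrom
    ({U : Set X | IsOpen U} ∪ {V : Set X | ∃ K : Set X, IsCompact K ∧ IsSaturatedSet K ∧ V = Kᶜ})

/-- Very dense subset: the whole space is both its saturation and its patch-closure. -/
def VeryDense {X : Type*} [TopologicalSpace X] (D : Set X) : Prop :=
  satOf D = Set.univ ∧ @Dense X (patchTopology X) D

/-- A subbasis: a covering family of open sets generating the topology. -/
def IsSubbasis {X : Type*} [t : TopologicalSpace X] (S : Set (Set X)) : Prop :=
  (∀ p ∈ S, IsOpen p) ∧ ⋃₀ S = Set.univ ∧ TopologicalSpace.generateFrom S = t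

/-- The compact cover relation `⊢_⋐` on the finite subsets of a family `S` of
subsets of a space `X`: `F ⊢ G` iff `⋂F ⋐ ⋃G`. -/
def subCover {X : Type*} [TopologicalSpace X] (S : Set (Set X)) :
    Finset ↥S → Finset ↥S → Prop := fun F G =>
  CompactlyContained (⋂ p ∈ F, (p : Set X)) (⋃ p ∈ G, (p : Set X))

/-- `∩`-roundness of a family of open sets. -/
def CapRound {X : Type*} [TopologicalSpace X] (S : Set (Set X)) : Prop :=
  ∀ p ∈ S, ∀ x ∈ p, ∃ F : Finset ↥S,
    x ∈ (⋂ q ∈ F, (q : Set X)) ∧ CompactlyContained (⋂ q ∈ F, (q : Set X)) p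

/-- A pseudosubbasis: a `∩`-round, `T0`-separating family of open sets. -/
def IsPseudoSubbasis {X : Type*} [TopologicalSpace X] (S : Set (Set X)) : Prop :=
  (∀ p ∈ S, IsOpen p) ∧ CapRound S ∧
    ∀ x y : X, x ≠ y → ∃ p ∈ S, (x ∈ p ∧ y ∉ p) ∨ (y ∈ p ∧ x ∉ p)

/-- A proximal map: continuous and preserving compact containment under preimages. -/
def Proximal {Y X : Type*} [TopologicalSpace Y] [TopologicalSpace X] (φ : Y → X) : Prop :=
  Continuous φ ∧ ∀ O N : Set X, IsOpen O → IsOpen N →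
    CompactlyContained O N → CompactlyContained (φ ⁻¹' O) (φ ⁻¹' N)

/-- `𝒬↓`: the finite sets `F` with `F ⊢ 𝒢_⋔` for some finite `𝒢 ⊆ 𝒬`. -/
def downSet {S : Type*} (r : Finset S → Finset S → Prop) (Q : Set (Finset S)) :
    Set (Finset S) :=
  {F | ∃ 𝒢 : Finset (Finset S), ↑𝒢 ⊆ Q ∧ ∀ H : Finset S, IsSelection 𝒢 H → r F H}

/-- Quasi-ideal: `𝒬 = 𝒬↓`. -/
def QuasiIdeal {S : Type*} (r : Finset S → Finset S → Prop) (Q : Set (Finset S)) : Prop :=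
  downSet r Q = Q

/-- `G^⊣ = {F : F ⊢ G}`. -/
def polar {S : Type*} (r : Finset S → Finset S → Prop) (G : Finset S) : Set (Finset S) :=
  {F | r F G}

/-- The way-below relation in the complete lattice of quasi-ideals (where the join
of a family `𝒟` is `(⋃₀𝒟)↓`): `Q ≪ R` iff every nonempty directed family of
quasi-ideals whose join contains `R` has a member containing `Q`. -/
def WayBelowQI {S : Type*} (r : Finset S → Finset S → Prop)
    (Q R : Set (Finset S)) : Prop :=
  ∀ 𝒟 : Set (Set (Finset S)), (∀ P ∈ 𝒟, QuasiIdeal r P) → 𝒟.Nonempty →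
    DirectedOn (· ⊆ ·) 𝒟 → R ⊆ downSet r (⋃₀ 𝒟) → ∃ P ∈ 𝒟, Q ⊆ P

/-! Cut-composition is membership in a down-closure: for monotone `⊢`, `F (⊢•⊨) G` iff
`F ∈ {I | I ⊨ G}↓`. So cut-idempotence says exactly that each `G^⊣` is a quasi-ideal, and then
so is each `(𝒢_⋔)^⊣ = ⋂_{H ∈ 𝒢_⋔} H^⊣`. A quasi-ideal `ℛ` is the directed union of the
quasi-ideals `(𝒢_⋔)^⊣` with `𝒢 ⊆ ℛ` finite, and a finite `𝒢` inside a directed union lies in one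
member; this describes `≪` and gives continuity. Meets, distributivity and stability all come
from one fact about selections: a selection of the pairwise unions `G₁ ∪ G₂` (`G₁ ∈ 𝒢₁`,
`G₂ ∈ 𝒢₂`) is a selection of `𝒢₁` or of `𝒢₂`. -/

open Finset

section Selections

variable {S : Type*} {𝒢 𝒢₁ 𝒢₂ ℱ : Finset (Finset S)} {H K : Finset S}

noncomputable def selections (𝒢 : Finset (Finset S)) : Finset (Finset S) :=
  (𝒢.sup id).powerset.filter (IsSelection 𝒢)

theorem mem_selections : H ∈ selections 𝒢 ↔ H ⊆ 𝒢.sup id ∧ IsSelection 𝒢 H := by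
  simp [selections]

theorem IsSelection.inter_sup_mem_selections (hH : IsSelection 𝒢 H) :
    H ∩ 𝒢.sup id ∈ selections 𝒢 := by
  refine mem_selections.2 ⟨inter_subset_right, fun G hG => ?_⟩
  obtain ⟨x, hxG, hxH⟩ := hH G hG
  exact ⟨x, hxG, mem_inter.2 ⟨hxH, mem_sup.2 ⟨G, hG, hxG⟩⟩⟩

theorem isSelection_sup_sdiff (h : ∀ G ∈ 𝒢, ¬ G ⊆ K) : IsSelection 𝒢 (𝒢.sup id \ K) := by
  intro G hG
  obtain ⟨x, hxG, hxK⟩ := not_subset.1 (h G hG)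
  exact ⟨x, hxG, mem_sdiff.2 ⟨mem_sup.2 ⟨G, hG, hxG⟩, hxK⟩⟩

theorem exists_subset_of_isSelection_selections (hK : IsSelection (selections 𝒢) K) :
    ∃ G ∈ 𝒢, G ⊆ K := by
  by_contra! h
  obtain ⟨x, hx, hxK⟩ := hK _ (mem_selections.2 ⟨sdiff_subset, isSelection_sup_sdiff h⟩)
  exact (mem_sdiff.1 hx).2 hxK

theorem exists_subset_of_isSelection_of_forall
    (hℱ : ∀ K, IsSelection ℱ K → ∃ G ∈ 𝒢, G ⊆ K) (hH : IsSelection 𝒢 H) :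
    ∃ F ∈ ℱ, F ⊆ H := by
  by_contra! h
  obtain ⟨G, hG, hGK⟩ := hℱ _ (isSelection_sup_sdiff h)
  obtain ⟨x, hxG, hxH⟩ := hH G hG
  exact (mem_sdiff.1 (hGK hxG)).2 hxH

theorem IsSelection.of_image₂_union (hH : IsSelection (image₂ (· ∪ ·) 𝒢₁ 𝒢₂) H) :
    IsSelection 𝒢₁ H ∨ IsSelection 𝒢₂ H := by
  refine or_iff_not_imp_right.2 fun h₂ G₁ hG₁ => ?_
  obtain ⟨G₂, hG₂, hG₂H⟩ : ∃ G₂ ∈ 𝒢₂, ∀ x ∈ G₂, x ∉ H := by simpa [IsSelection] using h₂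
  obtain ⟨x, hx, hxH⟩ := hH _ (mem_image₂_of_mem hG₁ hG₂)
  exact ⟨x, (mem_union.1 hx).resolve_right fun hx₂ => hG₂H x hx₂ hxH, hxH⟩

theorem not_isSelection_singleton_empty : ¬ IsSelection {∅} H := fun h => by
  simpa using h ∅ (mem_singleton_self _)

theorem biInter_selections_iUnion_subset {α : Type*} (p : S → Set α) :
    ⋂ H ∈ selections 𝒢, ⋃ h ∈ H, p h ⊆ ⋃ G ∈ 𝒢, ⋂ g ∈ G, p g := by
  intro a ha
  simp only [Set.mem_iInter, Set.mem_iUnion] at ha ⊢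
  obtain ⟨G, hG, hGsub⟩ := exists_subset_of_isSelection_selections
    (K := (𝒢.sup id).filter (a ∈ p ·)) fun H hH => by
      obtain ⟨h, hh, hah⟩ := ha H hH
      exact ⟨h, hh, mem_filter.2 ⟨(mem_selections.1 hH).1 hh, hah⟩⟩
  exact ⟨G, hG, fun g hg => (mem_filter.1 (hGsub hg)).2⟩

end Selections

section SelectionPolar

variable {A B C : Type*} {r : Finset A → Finset B → Prop} {s : Finset B → Finset C → Prop}
  {𝒢 𝒢₁ 𝒢₂ : Finset (Finset B)} {F : Finset A} {G : Finset C}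

/-- `(𝒢_⋔)^⊣` in the paper's notation. -/
def selectionPolar (r : Finset A → Finset B → Prop) (𝒢 : Finset (Finset B)) : Set (Finset A) :=
  {F | ∀ H, IsSelection 𝒢 H → r F H}

theorem selectionPolar_mono (h : 𝒢₁ ⊆ 𝒢₂) : selectionPolar r 𝒢₁ ⊆ selectionPolar r 𝒢₂ :=
  fun _ hF H hH => hF H fun I hI => hH I (h hI)

theorem selectionPolar_inter_subset :
    selectionPolar r 𝒢₁ ∩ selectionPolar r 𝒢₂ ⊆ selectionPolar r (image₂ (· ∪ ·) 𝒢₁ 𝒢₂) :=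
  fun _ hF H hH => hH.of_image₂_union.elim (hF.1 H) (hF.2 H)

theorem CutComp.exists_selectionPolar (hu : IsUpperRel r) (h : CutComp r s F G) :
    ∃ 𝒢, F ∈ selectionPolar r 𝒢 ∧ ∀ I ∈ 𝒢, s I G := by
  obtain ⟨ℱ, 𝒢, hFℱ, hℱ𝒢, h𝒢⟩ := h
  refine ⟨𝒢, fun H hH => ?_, h𝒢⟩
  obtain ⟨I, hI, hIH⟩ := exists_subset_of_isSelection_of_forall hℱ𝒢 hH
  exact hu F I H (hFℱ I hI) hIH

theorem cutComp_of_mem_selectionPolar (hF : F ∈ selectionPolar r 𝒢) (h𝒢 : ∀ I ∈ 𝒢, s I G) :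
    CutComp r s F G :=
  ⟨selections 𝒢, 𝒢, fun _ hH => hF _ (mem_selections.1 hH).2,
    fun _ => exists_subset_of_isSelection_selections, h𝒢⟩

end SelectionPolar

section QuasiIdeals

variable {S : Type*} {r : Finset S → Finset S → Prop} {X Y Q R P : Set (Finset S)}
  {𝒞 𝒟 : Set (Set (Finset S))} {𝒢 𝒢₁ 𝒢₂ : Finset (Finset S)} {F G : Finset S}

theorem selectionPolar_subset_downSet (h : ↑𝒢 ⊆ X) : selectionPolar r 𝒢 ⊆ downSet r X :=
  fun _ hF => ⟨𝒢, h, hF⟩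

theorem mem_downSet_setOf_iff_cutComp {C : Type*} {s : Finset S → Finset C → Prop}
    {G : Finset C} (hu : IsUpperRel r) : F ∈ downSet r {I | s I G} ↔ CutComp r s F G :=
  ⟨fun ⟨_, h𝒢, hF⟩ => cutComp_of_mem_selectionPolar hF h𝒢, fun h =>
    let ⟨𝒢, hF, h𝒢⟩ := h.exists_selectionPolar hu; ⟨𝒢, h𝒢, hF⟩⟩

theorem selectionPolar_eq_biInter_polar (hu : IsUpperRel r) (𝒢 : Finset (Finset S)) :
    selectionPolar r 𝒢 = ⋂ H ∈ selections 𝒢, polar r H := by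
  ext F
  simp only [Set.mem_iInter]
  exact ⟨fun hF H hH => hF H (mem_selections.1 hH).2,
    fun hF H hH => hu _ _ _ (hF _ hH.inter_sup_mem_selections) inter_subset_left⟩

theorem iInter_polar_singleton_subset_selectionPolar (hu : IsUpperRel r) (F : Finset S) :
    ⋂ f ∈ F, polar r {f} ⊆ selectionPolar r {F} := by
  intro K hK H hH
  obtain ⟨f, hf, hfH⟩ := hH F (mem_singleton_self F)
  exact hu K {f} H (Set.mem_iInter₂.1 hK f hf) (singleton_subset_iff.2 hfH)

theorem downSet_mono (h : X ⊆ Y) : downSet r X ⊆ downSet r Y :=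
  fun _ ⟨𝒢, h𝒢, hF⟩ => ⟨𝒢, h𝒢.trans h, hF⟩

theorem isUpperSet_downSet (hl : IsLowerRel r) : IsUpperSet (downSet r X) :=
  fun F F' hFF' ⟨𝒢, h𝒢, hF⟩ => ⟨𝒢, h𝒢, fun H hH => hl F H F' (hF H hH) hFF'⟩

theorem isUpperSet_polar (hl : IsLowerRel r) (G : Finset S) : IsUpperSet (polar r G) :=
  fun F F' hFF' hF => hl F G F' hF hFF'

theorem QuasiIdeal.isUpperSet (hl : IsLowerRel r) (hQ : QuasiIdeal r Q) : IsUpperSet Q :=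
  hQ ▸ isUpperSet_downSet hl

theorem QuasiIdeal.subset_downSet (hQ : QuasiIdeal r Q) (h : Q ⊆ X) : Q ⊆ downSet r X :=
  hQ.symm.subset.trans (downSet_mono h)

theorem QuasiIdeal.downSet_subset (hQ : QuasiIdeal r Q) (h : X ⊆ Q) : downSet r X ⊆ Q :=
  (downSet_mono h).trans hQ.subset

theorem sUnion_subset_downSet_sUnion (h𝒞 : ∀ Q ∈ 𝒞, QuasiIdeal r Q) :
    ⋃₀ 𝒞 ⊆ downSet r (⋃₀ 𝒞) :=
  Set.sUnion_subset fun Q hQ => (h𝒞 Q hQ).subset_downSet (Set.subset_sUnion_of_mem hQ)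

theorem coe_image₂_union_subset (hX : IsUpperSet X) (hY : IsUpperSet Y) (h₁ : ↑𝒢₁ ⊆ X)
    (h₂ : ↑𝒢₂ ⊆ Y) : ↑(image₂ (· ∪ ·) 𝒢₁ 𝒢₂) ⊆ X ∩ Y := by
  intro _ hG
  obtain ⟨G₁, hG₁, G₂, hG₂, rfl⟩ := mem_image₂.1 hG
  exact ⟨hX subset_union_left (h₁ hG₁), hY subset_union_right (h₂ hG₂)⟩

theorem downSet_inter_downSet_subset (hX : IsUpperSet X) (hY : IsUpperSet Y) :
    downSet r X ∩ downSet r Y ⊆ downSet r (X ∩ Y) :=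
  fun _ ⟨⟨_, h₁, hF₁⟩, ⟨_, h₂, hF₂⟩⟩ =>
    ⟨_, coe_image₂_union_subset hX hY h₁ h₂, selectionPolar_inter_subset ⟨hF₁, hF₂⟩⟩

theorem downSet_univ : downSet r Set.univ = Set.univ :=
  Set.eq_univ_of_forall fun _ =>
    ⟨{∅}, Set.subset_univ _, fun _ hH => (not_isSelection_singleton_empty hH).elim⟩

theorem biInter_downSet_subset {ι : Type*} (T : Finset ι) {X : ι → Set (Finset S)}
    (hX : ∀ i ∈ T, IsUpperSet (X i)) : ⋂ i ∈ T, downSet r (X i) ⊆ downSet r (⋂ i ∈ T, X i) := by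
  induction T using Finset.induction_on with
  | empty => simp [downSet_univ]
  | insert i T _ ih =>
    have hT : ∀ j ∈ T, IsUpperSet (X j) := fun j hj => hX j (mem_insert_of_mem hj)
    simp only [set_biInter_insert]
    exact (Set.inter_subset_inter_right _ (ih hT)).trans
      (downSet_inter_downSet_subset (hX i (mem_insert_self i T)) (isUpperSet_iInter₂ hT))

theorem quasiIdeal_univ : QuasiIdeal r Set.univ :=
  downSet_univ

theorem QuasiIdeal.inter (hl : IsLowerRel r) (hQ : QuasiIdeal r Q) (hR : QuasiIdeal r R) :
    QuasiIdeal r (Q ∩ R) :=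
  Set.Subset.antisymm
    (Set.subset_inter (hQ.downSet_subset Set.inter_subset_left)
      (hR.downSet_subset Set.inter_subset_right))
    ((Set.inter_subset_inter hQ.symm.subset hR.symm.subset).trans
      (downSet_inter_downSet_subset (hQ.isUpperSet hl) (hR.isUpperSet hl)))

theorem quasiIdeal_biInter {ι : Type*} (hl : IsLowerRel r) (T : Finset ι)
    {Q : ι → Set (Finset S)} (hQ : ∀ i ∈ T, QuasiIdeal r (Q i)) :
    QuasiIdeal r (⋂ i ∈ T, Q i) :=
  Set.Subset.antisymm
    (Set.subset_iInter₂ fun i hi => (hQ i hi).downSet_subset (Set.biInter_subset_of_mem hi))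
    ((Set.iInter₂_mono fun i hi => (hQ i hi).symm.subset).trans
      (biInter_downSet_subset T fun i hi => (hQ i hi).isUpperSet hl))

theorem QuasiIdeal.inter_downSet_sUnion (hl : IsLowerRel r) (hQ : QuasiIdeal r Q)
    (h𝒞 : ∀ P ∈ 𝒞, QuasiIdeal r P) :
    Q ∩ downSet r (⋃₀ 𝒞) = downSet r (⋃₀ ((Q ∩ ·) '' 𝒞)) := by
  rw [Set.sUnion_image, ← Set.inter_iUnion₂, ← Set.sUnion_eq_biUnion]
  refine Set.Subset.antisymm ?_ (Set.subset_inter (hQ.downSet_subset Set.inter_subset_left)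
    (downSet_mono Set.inter_subset_right))
  exact (Set.inter_subset_inter_left _ hQ.symm.subset).trans (downSet_inter_downSet_subset
    (hQ.isUpperSet hl) (isUpperSet_sUnion fun P hP => (h𝒞 P hP).isUpperSet hl))

theorem downSet_polar_subset (hu : IsUpperRel r) (ht : CutTransitive r) (G : Finset S) :
    downSet r (polar r G) ⊆ polar r G :=
  fun F hF => ht F G ((mem_downSet_setOf_iff_cutComp hu).1 hF)

theorem quasiIdeal_polar (hu : IsUpperRel r) (hidem : ∀ F G : Finset S, CutComp r r F G ↔ r F G)
    (G : Finset S) : QuasiIdeal r (polar r G) :=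
  Set.ext fun F => (mem_downSet_setOf_iff_cutComp hu).trans (hidem F G)

theorem downSet_downSet_subset (hu : IsUpperRel r) (ht : CutTransitive r) :
    downSet r (downSet r X) ⊆ downSet r X := by
  rintro F ⟨𝒢, h𝒢, hF⟩
  have h𝒢' : ∀ G ∈ 𝒢, ∃ ℋ : Finset (Finset S), ↑ℋ ⊆ X ∧ G ∈ selectionPolar r ℋ :=
    fun G hG => h𝒢 hG
  choose! ℋ hℋX hGℋ using h𝒢'
  refine ⟨𝒢.biUnion ℋ, fun I hI => ?_, fun H hH => downSet_polar_subset hu ht H ⟨𝒢, ?_, hF⟩⟩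
  · obtain ⟨G, hG, hIG⟩ := mem_biUnion.1 hI
    exact hℋX G hG hIG
  · exact fun G hG => hGℋ G hG H fun I hI => hH I (mem_biUnion.2 ⟨G, hG, hI⟩)

theorem quasiIdeal_downSet_sUnion (hu : IsUpperRel r) (ht : CutTransitive r)
    (h𝒞 : ∀ Q ∈ 𝒞, QuasiIdeal r Q) : QuasiIdeal r (downSet r (⋃₀ 𝒞)) :=
  Set.Subset.antisymm (downSet_downSet_subset hu ht)
    (downSet_mono (sUnion_subset_downSet_sUnion h𝒞))

theorem quasiIdeal_selectionPolar (hu : IsUpperRel r) (hl : IsLowerRel r)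
    (hidem : ∀ F G : Finset S, CutComp r r F G ↔ r F G) (𝒢 : Finset (Finset S)) :
    QuasiIdeal r (selectionPolar r 𝒢) := by
  rw [selectionPolar_eq_biInter_polar hu]
  exact quasiIdeal_biInter hl _ fun H _ => quasiIdeal_polar hu hidem H

theorem downSet_sUnion_subset_of_directedOn (h𝒟 : ∀ P ∈ 𝒟, QuasiIdeal r P)
    (hne : 𝒟.Nonempty) (hdir : DirectedOn (· ⊆ ·) 𝒟) : downSet r (⋃₀ 𝒟) ⊆ ⋃₀ 𝒟 := by
  rintro F ⟨𝒢, h𝒢, hF⟩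
  obtain ⟨P, hP, h𝒢P⟩ :=
    hdir.exists_mem_subset_of_finite_of_subset_sUnion hne 𝒢.finite_toSet h𝒢
  exact ⟨P, hP, (h𝒟 P hP).subset ⟨𝒢, h𝒢P, hF⟩⟩

theorem quasiIdeal_sUnion_of_directedOn (h𝒟 : ∀ P ∈ 𝒟, QuasiIdeal r P)
    (hne : 𝒟.Nonempty) (hdir : DirectedOn (· ⊆ ·) 𝒟) : QuasiIdeal r (⋃₀ 𝒟) :=
  Set.Subset.antisymm (downSet_sUnion_subset_of_directedOn h𝒟 hne hdir)
    (sUnion_subset_downSet_sUnion h𝒟)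

end QuasiIdeals

section WayBelow

variable {S : Type*} {r : Finset S → Finset S → Prop} {Q R P : Set (Finset S)}
  {𝒢 : Finset (Finset S)}

theorem wayBelowQI_of_subset_selectionPolar (h𝒢 : ↑𝒢 ⊆ R) (hQ : Q ⊆ selectionPolar r 𝒢) :
    WayBelowQI r Q R := by
  intro 𝒟 h𝒟 hne hdir hR
  obtain ⟨P, hP, h𝒢P⟩ := hdir.exists_mem_subset_of_finite_of_subset_sUnion hne 𝒢.finite_toSet
    (h𝒢.trans (hR.trans (downSet_sUnion_subset_of_directedOn h𝒟 hne hdir)))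
  exact ⟨P, hP, hQ.trans ((selectionPolar_subset_downSet h𝒢P).trans (h𝒟 P hP).subset)⟩

theorem WayBelowQI.exists_subset_selectionPolar (hu : IsUpperRel r) (hl : IsLowerRel r)
    (hidem : ∀ F G : Finset S, CutComp r r F G ↔ r F G) (hR : QuasiIdeal r R)
    (h : WayBelowQI r Q R) : ∃ 𝒢 : Finset (Finset S), ↑𝒢 ⊆ R ∧ Q ⊆ selectionPolar r 𝒢 := by
  let 𝒟 : Set (Set (Finset S)) := selectionPolar r '' {𝒢 | ↑𝒢 ⊆ R}
  have h𝒟 : ∀ P ∈ 𝒟, QuasiIdeal r P := by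
    rintro _ ⟨𝒢, -, rfl⟩
    exact quasiIdeal_selectionPolar hu hl hidem 𝒢
  have hdir : DirectedOn (· ⊆ ·) 𝒟 := by
    rintro _ ⟨𝒢₁, h₁, rfl⟩ _ ⟨𝒢₂, h₂, rfl⟩
    refine ⟨_, ⟨𝒢₁ ∪ 𝒢₂, ?_, rfl⟩, selectionPolar_mono subset_union_left,
      selectionPolar_mono subset_union_right⟩
    show ↑(𝒢₁ ∪ 𝒢₂) ⊆ R
    exact coe_union 𝒢₁ 𝒢₂ ▸ Set.union_subset h₁ h₂
  have hR𝒟 : R ⊆ ⋃₀ 𝒟 := fun F hF =>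
    let ⟨𝒢, h𝒢, hF⟩ := hR.symm.subset hF
    ⟨_, ⟨𝒢, h𝒢, rfl⟩, hF⟩
  obtain ⟨_, ⟨𝒢, h𝒢, rfl⟩, hQ⟩ :=
    h 𝒟 h𝒟 ⟨_, ∅, by simp, rfl⟩ hdir (hR𝒟.trans (sUnion_subset_downSet_sUnion h𝒟))
  exact ⟨𝒢, h𝒢, hQ⟩

theorem QuasiIdeal.eq_downSet_sUnion_wayBelowQI (hu : IsUpperRel r) (hl : IsLowerRel r)
    (hidem : ∀ F G : Finset S, CutComp r r F G ↔ r F G) (hR : QuasiIdeal r R) :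
    R = downSet r (⋃₀ {Q | QuasiIdeal r Q ∧ WayBelowQI r Q R}) := by
  refine Set.Subset.antisymm (fun F hF => ?_)
    (hR.downSet_subset (Set.sUnion_subset fun Q ⟨_, hQR⟩ => ?_))
  · obtain ⟨𝒢, h𝒢, hF⟩ := hR.symm.subset hF
    exact sUnion_subset_downSet_sUnion (fun Q hQ => hQ.1) ⟨_, ⟨quasiIdeal_selectionPolar hu hl
      hidem 𝒢, wayBelowQI_of_subset_selectionPolar h𝒢 subset_rfl⟩, hF⟩
  · obtain ⟨𝒢, h𝒢, hQ⟩ := hQR.exists_subset_selectionPolar hu hl hidem hR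
    exact hQ.trans ((selectionPolar_subset_downSet h𝒢).trans hR.subset)

theorem WayBelowQI.inter (hu : IsUpperRel r) (hl : IsLowerRel r)
    (hidem : ∀ F G : Finset S, CutComp r r F G ↔ r F G) (hR : QuasiIdeal r R)
    (hP : QuasiIdeal r P) (hQR : WayBelowQI r Q R) (hQP : WayBelowQI r Q P) :
    WayBelowQI r Q (R ∩ P) := by
  obtain ⟨𝒢₁, h𝒢₁, hQ₁⟩ := hQR.exists_subset_selectionPolar hu hl hidem hR
  obtain ⟨𝒢₂, h𝒢₂, hQ₂⟩ := hQP.exists_subset_selectionPolar hu hl hidem hP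
  exact wayBelowQI_of_subset_selectionPolar
    (coe_image₂_union_subset (hR.isUpperSet hl) (hP.isUpperSet hl) h𝒢₁ h𝒢₂)
    ((Set.subset_inter hQ₁ hQ₂).trans selectionPolar_inter_subset)

end WayBelow

section Divisible

variable {S : Type*} {r : Finset S → Finset S → Prop} {Q : Set (Finset S)} {F G : Finset S}

theorem iUnion_polar_singleton_eq (G : Finset S) :
    ⋃ g ∈ G, polar r {g} = {I | OneExists r I G} := by
  ext
  simp [polar, OneExists]

theorem divisible_iff_polar_eq (hu : IsUpperRel r) (ht : CutTransitive r) :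
    Divisible r ↔ ∀ G : Finset S, polar r G = downSet r (⋃ g ∈ G, polar r {g}) := by
  simp only [iUnion_polar_singleton_eq]
  have hsub (G : Finset S) : downSet r {I | OneExists r I G} ⊆ polar r G := by
    refine (downSet_mono ?_).trans (downSet_polar_subset hu ht G)
    rintro I ⟨g, hg, hIg⟩
    exact hu I {g} G hIg (singleton_subset_iff.2 hg)
  exact ⟨fun hdiv G => Set.Subset.antisymm
      (fun F hF => (mem_downSet_setOf_iff_cutComp hu).2 (hdiv F G hF)) (hsub G),
    fun h F G hFG => (mem_downSet_setOf_iff_cutComp hu).1 ((h G).subset hFG)⟩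

theorem QuasiIdeal.eq_downSet_iUnion_iInter_polar (hu : IsUpperRel r) (hl : IsLowerRel r)
    (hpolar : ∀ G : Finset S, polar r G = downSet r (⋃ g ∈ G, polar r {g}))
    (hQ : QuasiIdeal r Q) : Q = downSet r (⋃ G ∈ Q, ⋂ g ∈ G, polar r {g}) := by
  refine Set.Subset.antisymm (fun F hF => ?_) (hQ.downSet_subset (Set.iUnion₂_subset fun G hG =>
    (iInter_polar_singleton_subset_selectionPolar hu G).trans
      ((selectionPolar_subset_downSet (by simpa using hG)).trans hQ.subset)))
  obtain ⟨𝒢, h𝒢, hF⟩ : ∃ 𝒢 : Finset (Finset S), ↑𝒢 ⊆ Q ∧ F ∈ selectionPolar r 𝒢 :=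
    hQ.symm.subset hF
  rw [selectionPolar_eq_biInter_polar hu] at hF
  replace hF : F ∈ ⋂ H ∈ selections 𝒢, downSet r (⋃ h ∈ H, polar r {h}) := by
    simpa only [← hpolar] using hF
  refine downSet_mono ?_ (biInter_downSet_subset _ (fun H _ =>
    isUpperSet_iUnion₂ fun h _ => isUpperSet_polar hl {h}) hF)
  exact (biInter_selections_iUnion_subset _).trans
    (Set.iUnion₂_subset fun G hG =>
      Set.subset_biUnion_of_mem (u := fun G => ⋂ g ∈ G, polar r {g}) (h𝒢 hG))

theorem vdash_iff_iInter_polar_subset : Vdash r F G ↔ ⋂ f ∈ F, polar r {f} ⊆ polar r G := by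
  simp only [Vdash, Set.subset_def, Set.mem_iInter]
  rfl

end Divisible

section Auxiliary

variable {S : Type*} {r : Finset S → Finset S → Prop} {F G : Finset S}

/-- Enlarge `X` one element of `⋃𝒢 \ X` at a time until it contains a member of `𝒢`;
each step applies auxiliarity to the selection `⋃𝒢 \ X` of `𝒢`. -/
theorem AuxiliaryTo.rel_union (hAux : AuxiliaryTo r (Vdash r)) (hl : IsLowerRel r)
    {𝒢 : Finset (Finset S)} (h𝒢 : ↑𝒢 ⊆ polar r G)
    (hF : ⋂ f ∈ F, polar r {f} ⊆ selectionPolar r 𝒢) (X : Finset S) : r (F ∪ X) G := by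
  by_cases hX : ∃ I ∈ 𝒢, I ⊆ X
  · obtain ⟨I, hI, hIX⟩ := hX
    exact hl I G _ (h𝒢 hI) (hIX.trans subset_union_right)
  push Not at hX
  refine hAux (F ∪ X) (𝒢.sup id \ X) G (fun h hh => ?_)
    fun K hK => hF (Set.mem_iInter₂.2 fun f hf => hK f (mem_union_left X hf)) _
      (isSelection_sup_sdiff hX)
  have := hAux.rel_union hl h𝒢 hF (insert h X)
  rwa [union_insert] at this
termination_by (𝒢.sup id \ X).card
decreasing_by
  rw [sdiff_insert]
  exact card_erase_lt_of_mem hh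

theorem AuxiliaryTo.rel_of_wayBelowQI (hAux : AuxiliaryTo r (Vdash r)) (hu : IsUpperRel r)
    (hl : IsLowerRel r) (hidem : ∀ F G : Finset S, CutComp r r F G ↔ r F G)
    (h : WayBelowQI r (⋂ f ∈ F, polar r {f}) (polar r G)) : r F G := by
  obtain ⟨𝒢, h𝒢, hF⟩ := h.exists_subset_selectionPolar hu hl hidem (quasiIdeal_polar hu hidem G)
  simpa using hAux.rel_union hl h𝒢 hF ∅

theorem wayBelowQI_iInter_polar_of_rel (hu : IsUpperRel r) (h : r F G) :
    WayBelowQI r (⋂ f ∈ F, polar r {f}) (polar r G) :=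
  wayBelowQI_of_subset_selectionPolar (by rw [coe_singleton, Set.singleton_subset_iff]; exact h)
    (iInter_polar_singleton_subset_selectionPolar hu F)

theorem auxiliaryTo_vdash_of_wayBelowQI (hu : IsUpperRel r)
    (h : ∀ F G : Finset S, WayBelowQI r (⋂ f ∈ F, polar r {f}) (polar r G) → r F G) :
    AuxiliaryTo r (Vdash r) := by
  intro F H G hH hV
  refine h F G (wayBelowQI_of_subset_selectionPolar (𝒢 := H.image (insert · F)) ?_
    fun K hK L hL => ?_)
  · intro _ hI
    obtain ⟨h, hh, rfl⟩ := mem_image.1 hI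
    exact hH h hh
  have hKF : ∀ f ∈ F, r K {f} := fun f hf => Set.mem_iInter₂.1 hK f hf
  by_cases hFL : ∃ f ∈ F, f ∈ L
  · obtain ⟨f, hf, hfL⟩ := hFL
    exact hu K {f} L (hKF f hf) (singleton_subset_iff.2 hfL)
  push Not at hFL
  refine hu K H L (hV K hKF) fun h hh => ?_
  obtain ⟨x, hx, hxL⟩ := hL _ (mem_image_of_mem _ hh)
  rcases mem_insert.1 hx with rfl | hxF
  · exact hxL
  · exact absurd hxL (hFL x hxF)

theorem auxiliaryTo_vdash_iff (hu : IsUpperRel r) (hl : IsLowerRel r)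
    (hidem : ∀ F G : Finset S, CutComp r r F G ↔ r F G) :
    AuxiliaryTo r (Vdash r) ↔
      ∀ F G : Finset S, r F G ↔ WayBelowQI r (⋂ f ∈ F, polar r {f}) (polar r G) :=
  ⟨fun hAux _ _ => ⟨wayBelowQI_iInter_polar_of_rel hu, hAux.rel_of_wayBelowQI hu hl hidem⟩,
    fun h => auxiliaryTo_vdash_of_wayBelowQI hu fun F G => (h F G).2⟩

end Auxiliary

/-- **The quasi-ideals of a monotone cut-idempotent form a stably continuous frame.** -/
theorem quasi_ideals_stably_continuous_frame {S : Type*} (r : Finset S → Finset S → Prop)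
    (hu : IsUpperRel r) (hl : IsLowerRel r)
    (hidem : ∀ F G : Finset S, CutComp r r F G ↔ r F G) :
    -- `(⋃₀𝒞)↓` is the join of any family `𝒞` of quasi-ideals
    (∀ 𝒞 : Set (Set (Finset S)), (∀ Q ∈ 𝒞, QuasiIdeal r Q) →
      QuasiIdeal r (downSet r (⋃₀ 𝒞)) ∧
      (∀ Q ∈ 𝒞, Q ⊆ downSet r (⋃₀ 𝒞)) ∧
      (∀ R : Set (Finset S), QuasiIdeal r R → (∀ Q ∈ 𝒞, Q ⊆ R) →
        downSet r (⋃₀ 𝒞) ⊆ R)) ∧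
    -- directed joins are unions
    (∀ 𝒟 : Set (Set (Finset S)), (∀ Q ∈ 𝒟, QuasiIdeal r Q) → 𝒟.Nonempty →
      DirectedOn (· ⊆ ·) 𝒟 → QuasiIdeal r (⋃₀ 𝒟)) ∧
    -- finite meets are intersections (and the top element is `𝖥S`)
    QuasiIdeal r (Set.univ : Set (Finset S)) ∧
    (∀ Q R : Set (Finset S), QuasiIdeal r Q → QuasiIdeal r R → QuasiIdeal r (Q ∩ R)) ∧
    -- finite meets distribute over arbitrary joins
    (∀ Q : Set (Finset S), QuasiIdeal r Q →
      ∀ 𝒞 : Set (Set (Finset S)), (∀ P ∈ 𝒞, QuasiIdeal r P) →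
        Q ∩ downSet r (⋃₀ 𝒞) = downSet r (⋃₀ ((fun P => Q ∩ P) '' 𝒞))) ∧
    -- characterisation of the way-below relation
    (∀ Q R : Set (Finset S), QuasiIdeal r Q → QuasiIdeal r R →
      (WayBelowQI r Q R ↔ ∃ 𝒢 : Finset (Finset S), ↑𝒢 ⊆ R ∧
        ∀ F ∈ Q, ∀ H : Finset S, IsSelection 𝒢 H → r F H)) ∧
    -- continuity: every quasi-ideal is the join of the quasi-ideals way below it
    (∀ R : Set (Finset S), QuasiIdeal r R →
      R = downSet r (⋃₀ {Q : Set (Finset S) | QuasiIdeal r Q ∧ WayBelowQI r Q R})) ∧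
    -- stability of the way-below relation
    (∀ Q R P : Set (Finset S), QuasiIdeal r Q → QuasiIdeal r R → QuasiIdeal r P →
      WayBelowQI r Q R → WayBelowQI r Q P → WayBelowQI r Q (R ∩ P)) ∧
    -- (a) divisibility iff `G^⊣ = ⋁_{g ∈ G} g^⊣`
    (Divisible r ↔ ∀ G : Finset S, polar r G = downSet r (⋃ g ∈ G, polar r {g})) ∧
    -- in that case the principal quasi-ideals generate, and `⊩` is containment
    (Divisible r →
      (∀ Q : Set (Finset S), QuasiIdeal r Q →
        Q = downSet r (⋃ G ∈ Q, ⋂ g ∈ G, polar r {g})) ∧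
      (∀ F G : Finset S, Vdash r F G ↔
        (⋂ f ∈ F, polar r {f}) ⊆ downSet r (⋃ g ∈ G, polar r {g}))) ∧
    -- (b) auxiliarity to `⊩` iff `⊢` is the way-below relation on generators
    (Divisible r →
      (AuxiliaryTo r (Vdash r) ↔ ∀ F G : Finset S,
        (r F G ↔ WayBelowQI r (⋂ f ∈ F, polar r {f}) (downSet r (⋃ g ∈ G, polar r {g}))))) := by
  have ht : CutTransitive r := fun F G => (hidem F G).1
  refine ⟨fun 𝒞 h𝒞 => ⟨quasiIdeal_downSet_sUnion hu ht h𝒞,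
      fun Q hQ => (h𝒞 Q hQ).subset_downSet (Set.subset_sUnion_of_mem hQ),
      fun R hR h => hR.downSet_subset (Set.sUnion_subset h)⟩,
    fun _ => quasiIdeal_sUnion_of_directedOn, quasiIdeal_univ,
    fun _ _ => QuasiIdeal.inter hl, fun _ hQ _ => hQ.inter_downSet_sUnion hl,
    fun _ _ _ hR => ⟨fun h => h.exists_subset_selectionPolar hu hl hidem hR,
      fun ⟨_, h𝒢, hQ⟩ => wayBelowQI_of_subset_selectionPolar h𝒢 hQ⟩,
    fun _ => QuasiIdeal.eq_downSet_sUnion_wayBelowQI hu hl hidem,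
    fun _ _ _ _ hR hP => WayBelowQI.inter hu hl hidem hR hP,
    divisible_iff_polar_eq hu ht, fun hdiv => ?_, fun hdiv => ?_⟩
  all_goals have hpolar := (divisible_iff_polar_eq hu ht).1 hdiv
  · refine ⟨fun _ => QuasiIdeal.eq_downSet_iUnion_iInter_polar hu hl hpolar, fun F G => ?_⟩
    rw [← hpolar]
    exact vdash_iff_iInter_polar_subset
  · simp only [← hpolar]
    exact auxiliaryTo_vdash_iff hu hl hidem
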